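/- Let A ∈ ℝ^{n×m} have rank r ≥ 1 and let B ∈ ℝ^{m×n}. By the Cauchy–Binet formula, the sum of the r×r principal minors of AB equals Σ_{|α|=|β|=r} A[α|β]·B[β|α]. Consequently, if A[α|β]·B[β|α] ≥ 0 for all index sets α, β of size r with strict inequality for at least one pair, then det_A(AB) > 0 and rank(A·B·A) = r. -/

import Mathlib

/-- The sum of the `r×r` principal minors of a square matrix `M`. -/
def sumPrincMinors {N : ℕ} (r : ℕ) (M : Matrix (Fin N) (Fin N) ℝ) : ℝ :=
  ∑ s : Finset (Fin N),
    if h : s.card = r then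
      (M.submatrix (⇑(s.orderEmbOfFin h)) (⇑(s.orderEmbOfFin h))).det
    else 0


open Finset Matrix

section CB

variable {r m : ℕ}

private lemma image_orderEmb_comp (t : Finset (Fin m)) (h : t.card = r) (π : Equiv.Perm (Fin r)) :
    Finset.image (⇑(t.orderEmbOfFin h) ∘ ⇑π) Finset.univ = t := by
  apply Finset.eq_of_subset_of_card_le
  · intro x hx
    simp only [Finset.mem_image, Function.comp_apply] at hx
    obtain ⟨i, -, rfl⟩ := hx
    exact Finset.orderEmbOfFin_mem _ _ _
  · rw [Finset.card_image_of_injective _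
      ((t.orderEmbOfFin h).injective.comp π.injective), Finset.card_univ, Fintype.card_fin, h]

private lemma orderEmb_congr {t t' : Finset (Fin m)} (e : t = t') (h : t.card = r)
    (h' : t'.card = r) : ⇑(t.orderEmbOfFin h) = ⇑(t'.orderEmbOfFin h') := by
  subst e; rfl

private lemma sum_fun_eq_sum_subsets {M : Type*} [AddCommMonoid M] (F : (Fin r → Fin m) → M)
    (hF : ∀ f : Fin r → Fin m, ¬ Function.Injective f → F f = 0) :
    (∑ f : Fin r → Fin m, F f)
      = ∑ t : Finset (Fin m), if h : t.card = r then
          ∑ π : Equiv.Perm (Fin r), F (⇑(t.orderEmbOfFin h) ∘ ⇑π) else 0 := by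
  classical
  -- restrict LHS to injective functions
  rw [show (∑ f : Fin r → Fin m, F f)
      = ∑ f ∈ Finset.univ.filter (fun f : Fin r → Fin m => Function.Injective f), F f from
    (Finset.sum_subset (Finset.filter_subset _ _) fun f _ hf => hF f (by simpa using hf)).symm]
  -- restrict RHS to subsets of card r
  rw [show (∑ t : Finset (Fin m), if h : t.card = r then
          ∑ π : Equiv.Perm (Fin r), F (⇑(t.orderEmbOfFin h) ∘ ⇑π) else 0)
      = ∑ t ∈ Finset.univ.filter (fun t : Finset (Fin m) => t.card = r),
          (if h : t.card = r then
            ∑ π : Equiv.Perm (Fin r), F (⇑(t.orderEmbOfFin h) ∘ ⇑π) else 0) from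
    (Finset.sum_subset (Finset.filter_subset _ _) fun t _ ht => by
      rw [dif_neg (by simpa using ht)]).symm]
  rw [← Finset.sum_attach (Finset.univ.filter (fun t : Finset (Fin m) => t.card = r))]
  have hmem : ∀ x : {t // t ∈ Finset.univ.filter (fun t : Finset (Fin m) => t.card = r)},
      (x : Finset (Fin m)).card = r := fun x => (Finset.mem_filter.mp x.2).2
  rw [Finset.sum_congr rfl (fun x _ => dif_pos (hmem x))]
  rw [← Finset.sum_product' (s := (Finset.univ.filter
      (fun t : Finset (Fin m) => t.card = r)).attach) (t := Finset.univ)]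
  refine (Finset.sum_bij
    (fun (p : {t // t ∈ Finset.univ.filter (fun t : Finset (Fin m) => t.card = r)}
        × Equiv.Perm (Fin r)) (_ : p ∈ _) =>
      ⇑((p.1 : Finset (Fin m)).orderEmbOfFin (hmem p.1)) ∘ ⇑p.2) ?_ ?_ ?_ ?_).symm
  · intro p _
    simp only [Finset.mem_filter, Finset.mem_univ, true_and]
    exact ((p.1 : Finset (Fin m)).orderEmbOfFin (hmem p.1)).injective.comp p.2.injective
  · intro p₁ h₁ p₂ h₂ heq
    have heq' : ⇑((p₁.1 : Finset (Fin m)).orderEmbOfFin (hmem p₁.1)) ∘ ⇑p₁.2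
        = ⇑((p₂.1 : Finset (Fin m)).orderEmbOfFin (hmem p₂.1)) ∘ ⇑p₂.2 := heq
    have ht : (p₁.1 : Finset (Fin m)) = p₂.1 := by
      rw [← image_orderEmb_comp ((p₁.1 : Finset (Fin m))) (hmem p₁.1) p₁.2,
        ← image_orderEmb_comp ((p₂.1 : Finset (Fin m))) (hmem p₂.1) p₂.2, heq']
    have he : ⇑((p₁.1 : Finset (Fin m)).orderEmbOfFin (hmem p₁.1))
        = ⇑((p₂.1 : Finset (Fin m)).orderEmbOfFin (hmem p₂.1)) := orderEmb_congr ht _ _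
    have hπ : (p₁.2 : Equiv.Perm (Fin r)) = p₂.2 := by
      apply Equiv.ext
      intro i
      apply ((p₁.1 : Finset (Fin m)).orderEmbOfFin (hmem p₁.1)).injective
      have hfi := congrFun heq' i
      simp only [Function.comp_apply] at hfi
      rw [hfi]
      exact (congrFun he _).symm
    exact Prod.ext (Subtype.ext ht) hπ
  · intro f hf
    have hinj : Function.Injective f := (Finset.mem_filter.mp hf).2
    have ht : (Finset.image f Finset.univ).card = r := by
      rw [Finset.card_image_of_injective _ hinj, Finset.card_univ, Fintype.card_fin]
    have htm : Finset.image f Finset.univ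
        ∈ Finset.univ.filter (fun t : Finset (Fin m) => t.card = r) := by
      simp [ht]
    have hg : Function.Injective (fun i =>
        ((Finset.image f Finset.univ).orderIsoOfFin ht).symm
          ⟨f i, Finset.mem_image_of_mem f (Finset.mem_univ i)⟩) := by
      intro i j hij
      apply hinj
      have := congrArg (fun z => (((Finset.image f Finset.univ).orderIsoOfFin ht) z : Fin m)) hij
      simpa using this
    refine ⟨(⟨Finset.image f Finset.univ, htm⟩,
      Equiv.ofBijective _ (Finite.injective_iff_bijective.mp hg)),
      Finset.mem_product.mpr ⟨Finset.mem_attach _ _, Finset.mem_univ _⟩, ?_⟩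
    funext i
    show (Finset.image f Finset.univ).orderEmbOfFin _
      (((Finset.image f Finset.univ).orderIsoOfFin ht).symm
        ⟨f i, Finset.mem_image_of_mem f (Finset.mem_univ i)⟩) = f i
    rw [← Finset.coe_orderIsoOfFin_apply]
    simp
  · intro p _
    rfl

end CB

private lemma det_mul_eq_sum_fun (C : Matrix (Fin r) (Fin m) ℝ) (D : Matrix (Fin m) (Fin r) ℝ) :
    (C * D).det = ∑ f : Fin r → Fin m, (∏ i, C i (f i)) * (D.submatrix f id).det := by
  have h1 : C * D = Matrix.of fun i => ∑ j, C i j • D j := by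
    ext i k
    simp [Matrix.mul_apply, Finset.sum_apply]
  rw [h1]
  have h2 := (Matrix.detRowAlternating (R := ℝ) (n := Fin r)).toMultilinearMap.map_sum
    (g := fun i j => C i j • D j)
  refine h2.trans (Finset.sum_congr rfl fun f _ => ?_)
  have h3 := (Matrix.detRowAlternating (R := ℝ) (n := Fin r)).toMultilinearMap.map_smul_univ
    (fun i => C i (f i)) (fun i => D (f i))
  exact h3.trans (by rw [smul_eq_mul]; rfl)

lemma cauchyBinet (C : Matrix (Fin r) (Fin m) ℝ) (D : Matrix (Fin m) (Fin r) ℝ) :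
    (C * D).det = ∑ t : Finset (Fin m), if h : t.card = r then
      (C.submatrix id (⇑(t.orderEmbOfFin h))).det * (D.submatrix (⇑(t.orderEmbOfFin h)) id).det
    else 0 := by
  rw [det_mul_eq_sum_fun,
    sum_fun_eq_sum_subsets (fun f => (∏ i, C i (f i)) * (D.submatrix f id).det)
      (fun f hf => by
        rw [Function.not_injective_iff] at hf
        obtain ⟨i, j, hij, hne⟩ := hf
        rw [Matrix.det_zero_of_row_eq hne (by ext k; simp [hij]), mul_zero])]
  refine Finset.sum_congr rfl fun t _ => ?_
  by_cases h : t.card = r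
  · rw [dif_pos h, dif_pos h]
    have key : ∀ π : Equiv.Perm (Fin r),
        (D.submatrix (⇑(t.orderEmbOfFin h) ∘ ⇑π) id).det
          = ((Equiv.Perm.sign π : ℤ) : ℝ) * (D.submatrix (⇑(t.orderEmbOfFin h)) id).det := by
      intro π
      have : D.submatrix (⇑(t.orderEmbOfFin h) ∘ ⇑π) id
          = (D.submatrix (⇑(t.orderEmbOfFin h)) id).submatrix (⇑π) id := by
        ext i j; rfl
      rw [this, Matrix.det_permute]
    calc (∑ π : Equiv.Perm (Fin r),
            (∏ i, C i ((⇑(t.orderEmbOfFin h) ∘ ⇑π) i)) *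
              (D.submatrix (⇑(t.orderEmbOfFin h) ∘ ⇑π) id).det)
        = (∑ π : Equiv.Perm (Fin r), ((Equiv.Perm.sign π : ℤ) : ℝ) *
            ∏ i, C i (t.orderEmbOfFin h (π i))) * (D.submatrix (⇑(t.orderEmbOfFin h)) id).det := by
          rw [Finset.sum_mul]
          refine Finset.sum_congr rfl fun π _ => ?_
          rw [key π]; simp only [Function.comp_apply]; ring
      _ = _ := by
          congr 1
          rw [← Matrix.det_transpose]
          rw [Matrix.det_apply']
          rfl
  · rw [dif_neg h, dif_neg h]

lemma cauchyBinet' {r p q s : ℕ} (X : Matrix (Fin p) (Fin q) ℝ) (Y : Matrix (Fin q) (Fin s) ℝ)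
    (f : Fin r → Fin p) (g : Fin r → Fin s) :
    ((X * Y).submatrix f g).det = ∑ t : Finset (Fin q), if h : t.card = r then
      (X.submatrix f (⇑(t.orderEmbOfFin h))).det * (Y.submatrix (⇑(t.orderEmbOfFin h)) g).det
    else 0 := by
  have h1 : (X * Y).submatrix f g = (X.submatrix f id) * (Y.submatrix id g) := by
    ext i j
    simp [Matrix.mul_apply]
  rw [h1, cauchyBinet]
  refine Finset.sum_congr rfl fun t _ => ?_
  by_cases h : t.card = r
  · rw [dif_pos h, dif_pos h, Matrix.submatrix_submatrix, Matrix.submatrix_submatrix]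
    simp [Function.comp_def]
  · rw [dif_neg h, dif_neg h]

lemma rank_ge_of_minor {n m r : ℕ} (M : Matrix (Fin n) (Fin m) ℝ) (f : Fin r → Fin n)
    (g : Fin r → Fin m) (h : (M.submatrix f g).det ≠ 0) : r ≤ M.rank := by
  classical
  have h1 : M.submatrix f g
      = (Matrix.of fun (i : Fin r) (k : Fin n) => if k = f i then (1 : ℝ) else 0) * M *
        (Matrix.of fun (k : Fin m) (j : Fin r) => if k = g j then (1 : ℝ) else 0) := by
    ext i j
    simp [Matrix.mul_apply, ite_mul, mul_ite]
  have h2 : (M.submatrix f g).rank = r := by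
    rw [Matrix.rank_of_isUnit _ ((Matrix.isUnit_iff_isUnit_det _).mpr
      (isUnit_iff_ne_zero.mpr h)), Fintype.card_fin]
  calc r = (M.submatrix f g).rank := h2.symm
    _ ≤ M.rank := by
        rw [h1]
        exact le_trans (Matrix.rank_mul_le_left _ _) (Matrix.rank_mul_le_right _ _)

lemma exists_rank_factorization {n m : ℕ} (A : Matrix (Fin n) (Fin m) ℝ) :
    ∃ (C : Matrix (Fin n) (Fin A.rank) ℝ) (D : Matrix (Fin A.rank) (Fin m) ℝ), A = C * D := by
  classical
  set V := LinearMap.range A.mulVecLin with hV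
  have hrk : Module.finrank ℝ V = A.rank := rfl
  let b : Module.Basis (Fin A.rank) ℝ V := Module.finBasisOfFinrankEq ℝ V hrk
  have hcol : ∀ j : Fin m, (fun i => A i j) ∈ V := by
    intro j
    refine ⟨Pi.single j 1, ?_⟩
    ext i
    simp [Matrix.mulVecLin, Matrix.mulVec_single]
  refine ⟨Matrix.of fun i k => ((b k : Fin n → ℝ) i),
    Matrix.of fun k j => b.repr ⟨fun i => A i j, hcol j⟩ k, ?_⟩
  ext i j
  rw [Matrix.mul_apply]
  have h1 := b.sum_repr ⟨fun i => A i j, hcol j⟩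
  have h2 := congrArg (fun v : V => (v : Fin n → ℝ) i) h1
  simp only [AddSubmonoidClass.coe_finset_sum, Finset.sum_apply, SetLike.val_smul,
    Pi.smul_apply, smul_eq_mul] at h2
  rw [← h2]
  refine Finset.sum_congr rfl fun k _ => ?_
  simp [mul_comm]

section Main

variable {n m r' : ℕ}

noncomputable def vB (D : Matrix (Fin r') (Fin m) ℝ) (t : Finset (Fin m)) : ℝ :=
  if h : t.card = r' then (D.submatrix id (⇑(t.orderEmbOfFin h))).det else 0

noncomputable def wB (D : Matrix (Fin r') (Fin m) ℝ) (B : Matrix (Fin m) (Fin n) ℝ)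
    (g : Fin r' → Fin n) : ℝ :=
  ∑ t : Finset (Fin m), if h : t.card = r' then
    vB D t * (B.submatrix (⇑(t.orderEmbOfFin h)) g).det else 0

lemma detA_eq (C : Matrix (Fin n) (Fin r') ℝ) (D : Matrix (Fin r') (Fin m) ℝ)
    (f : Fin r' → Fin n) (g : Fin r' → Fin m) :
    ((C * D).submatrix f g).det = (C.submatrix f id).det * (D.submatrix id g).det := by
  have h1 : (C * D).submatrix f g = (C.submatrix f id) * (D.submatrix id g) := by
    ext i j
    simp [Matrix.mul_apply]
  rw [h1, Matrix.det_mul]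

lemma detAB_eq (C : Matrix (Fin n) (Fin r') ℝ) (D : Matrix (Fin r') (Fin m) ℝ)
    (B : Matrix (Fin m) (Fin n) ℝ) (f g : Fin r' → Fin n) :
    ((C * D * B).submatrix f g).det = (C.submatrix f id).det * wB D B g := by
  rw [cauchyBinet' (C * D) B f g, wB, Finset.mul_sum]
  refine Finset.sum_congr rfl fun t _ => ?_
  by_cases h : t.card = r'
  · rw [dif_pos h, dif_pos h, detA_eq, vB, dif_pos h]
    ring
  · rw [dif_neg h, dif_neg h, mul_zero]

lemma sumPrinc_eq (C : Matrix (Fin n) (Fin r') ℝ) (D : Matrix (Fin r') (Fin m) ℝ)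
    (B : Matrix (Fin m) (Fin n) ℝ) :
    sumPrincMinors r' (C * D * B) = ∑ s : Finset (Fin n), if h : s.card = r' then
      (C.submatrix (⇑(s.orderEmbOfFin h)) id).det * wB D B (⇑(s.orderEmbOfFin h)) else 0 := by
  unfold sumPrincMinors
  refine Finset.sum_congr rfl fun s _ => ?_
  by_cases h : s.card = r'
  · rw [dif_pos h, dif_pos h, detAB_eq]
  · rw [dif_neg h, dif_neg h]

lemma detABA_eq (C : Matrix (Fin n) (Fin r') ℝ) (D : Matrix (Fin r') (Fin m) ℝ)
    (B : Matrix (Fin m) (Fin n) ℝ) (f : Fin r' → Fin n) (g : Fin r' → Fin m) :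
    ((C * D * B * (C * D)).submatrix f g).det
      = (C.submatrix f id).det * (D.submatrix id g).det * sumPrincMinors r' (C * D * B) := by
  rw [cauchyBinet' (C * D * B) (C * D) f g, sumPrinc_eq C D B, Finset.mul_sum]
  refine Finset.sum_congr rfl fun t _ => ?_
  by_cases h : t.card = r'
  · rw [dif_pos h, dif_pos h, detAB_eq, detA_eq]
    ring
  · rw [dif_neg h, dif_neg h, mul_zero]

end Main

/-- Cauchy–Binet for the reduced determinant: the sum of `r×r` principal minors of `AB`
equals `Σ_{|α|=|β|=r} A[α|β]·B[β|α]`. Consequently, nonnegativity of all these products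
with strict inequality somewhere gives `det_A(AB) > 0` and `rank(A·B·A) = r`. -/
theorem stmt_5 (n m : ℕ) (A : Matrix (Fin n) (Fin m) ℝ) (B : Matrix (Fin m) (Fin n) ℝ)
    (hr : 1 ≤ A.rank) :
    (sumPrincMinors A.rank (A * B) =
      ∑ s : Finset (Fin n), ∑ t : Finset (Fin m),
        if hs : s.card = A.rank then
          if ht : t.card = A.rank then
            (A.submatrix (⇑(s.orderEmbOfFin hs)) (⇑(t.orderEmbOfFin ht))).det *
              (B.submatrix (⇑(t.orderEmbOfFin ht)) (⇑(s.orderEmbOfFin hs))).det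
          else 0
        else 0) ∧
    ((∀ (α : Fin A.rank → Fin n) (β : Fin A.rank → Fin m), StrictMono α → StrictMono β →
        0 ≤ (A.submatrix α β).det * (B.submatrix β α).det) →
      (∃ (α : Fin A.rank → Fin n) (β : Fin A.rank → Fin m), StrictMono α ∧ StrictMono β ∧
        0 < (A.submatrix α β).det * (B.submatrix β α).det) →
      0 < sumPrincMinors A.rank (A * B) ∧ (A * B * A).rank = A.rank) := by
  classical
  have hpart1 : sumPrincMinors A.rank (A * B) =
      ∑ s : Finset (Fin n), ∑ t : Finset (Fin m),
        if hs : s.card = A.rank then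
          if ht : t.card = A.rank then
            (A.submatrix (⇑(s.orderEmbOfFin hs)) (⇑(t.orderEmbOfFin ht))).det *
              (B.submatrix (⇑(t.orderEmbOfFin ht)) (⇑(s.orderEmbOfFin hs))).det
          else 0
        else 0 := by
    unfold sumPrincMinors
    refine Finset.sum_congr rfl fun s _ => ?_
    by_cases hs : s.card = A.rank
    · rw [dif_pos hs, cauchyBinet' A B]
      refine Finset.sum_congr rfl fun t _ => ?_
      by_cases ht : t.card = A.rank
      · rw [dif_pos ht, dif_pos hs, dif_pos ht]
      · rw [dif_neg ht, dif_pos hs, dif_neg ht]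
    · rw [dif_neg hs, eq_comm]
      exact Finset.sum_eq_zero fun t _ => dif_neg hs
  refine ⟨hpart1, fun hnn hex => ?_⟩
  have hterm_nonneg : ∀ (s : Finset (Fin n)) (t : Finset (Fin m)),
      0 ≤ (if hs : s.card = A.rank then
          if ht : t.card = A.rank then
            (A.submatrix (⇑(s.orderEmbOfFin hs)) (⇑(t.orderEmbOfFin ht))).det *
              (B.submatrix (⇑(t.orderEmbOfFin ht)) (⇑(s.orderEmbOfFin hs))).det
          else 0
        else 0) := by
    intro s t
    by_cases hs : s.card = A.rank
    · by_cases ht : t.card = A.rank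
      · rw [dif_pos hs, dif_pos ht]
        exact hnn _ _ (s.orderEmbOfFin hs).strictMono (t.orderEmbOfFin ht).strictMono
      · rw [dif_pos hs, dif_neg ht]
    · rw [dif_neg hs]
  have hpos : 0 < sumPrincMinors A.rank (A * B) := by
    rw [hpart1]
    obtain ⟨α, β, hα, hβ, hp⟩ := hex
    have hs₀ : (Finset.image α Finset.univ).card = A.rank := by
      rw [Finset.card_image_of_injective _ hα.injective, Finset.card_univ, Fintype.card_fin]
    have ht₀ : (Finset.image β Finset.univ).card = A.rank := by
      rw [Finset.card_image_of_injective _ hβ.injective, Finset.card_univ, Fintype.card_fin]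
    have hαe : α = ⇑((Finset.image α Finset.univ).orderEmbOfFin hs₀) :=
      Finset.orderEmbOfFin_unique hs₀ (fun i => Finset.mem_image_of_mem _ (Finset.mem_univ _)) hα
    have hβe : β = ⇑((Finset.image β Finset.univ).orderEmbOfFin ht₀) :=
      Finset.orderEmbOfFin_unique ht₀ (fun i => Finset.mem_image_of_mem _ (Finset.mem_univ _)) hβ
    refine Finset.sum_pos' (fun s _ => Finset.sum_nonneg fun t _ => hterm_nonneg s t)
      ⟨Finset.image α Finset.univ, Finset.mem_univ _, ?_⟩
    refine Finset.sum_pos' (fun t _ => hterm_nonneg _ t)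
      ⟨Finset.image β Finset.univ, Finset.mem_univ _, ?_⟩
    rw [dif_pos hs₀, dif_pos ht₀, ← hαe, ← hβe]
    exact hp
  refine ⟨hpos, ?_⟩
  obtain ⟨C, D, hACD⟩ := exists_rank_factorization A
  have hc : sumPrincMinors A.rank (A * B) ≠ 0 := ne_of_gt hpos
  have hsum : sumPrincMinors A.rank (A * B)
      = ∑ s : Finset (Fin n), if h : s.card = A.rank then
          (C.submatrix (⇑(s.orderEmbOfFin h)) id).det * wB D B (⇑(s.orderEmbOfFin h)) else 0 := by
    rw [show A * B = C * D * B from by rw [← hACD]]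
    exact sumPrinc_eq C D B
  have hcs := hc
  rw [hsum] at hcs
  obtain ⟨s₀, -, hs₀ne⟩ := Finset.exists_ne_zero_of_sum_ne_zero hcs
  have hs₀ : s₀.card = A.rank := by
    by_contra h
    rw [dif_neg h] at hs₀ne
    exact hs₀ne rfl
  rw [dif_pos hs₀] at hs₀ne
  have hu : (C.submatrix (⇑(s₀.orderEmbOfFin hs₀)) id).det ≠ 0 := left_ne_zero_of_mul hs₀ne
  have hw : wB D B (⇑(s₀.orderEmbOfFin hs₀)) ≠ 0 := right_ne_zero_of_mul hs₀ne
  rw [wB] at hw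
  obtain ⟨t₀, -, ht₀ne⟩ := Finset.exists_ne_zero_of_sum_ne_zero hw
  have ht₀ : t₀.card = A.rank := by
    by_contra h
    rw [dif_neg h] at ht₀ne
    exact ht₀ne rfl
  rw [dif_pos ht₀] at ht₀ne
  have hv : vB D t₀ ≠ 0 := left_ne_zero_of_mul ht₀ne
  rw [vB, dif_pos ht₀] at hv
  have hminor : ((A * B * A).submatrix (⇑(s₀.orderEmbOfFin hs₀)) (⇑(t₀.orderEmbOfFin ht₀))).det
      ≠ 0 := by
    rw [show A * B * A = C * D * B * (C * D) from by rw [← hACD], detABA_eq C D B,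
      show sumPrincMinors A.rank (C * D * B) = sumPrincMinors A.rank (A * B) from by
        rw [← hACD]]
    exact mul_ne_zero (mul_ne_zero hu hv) hc
  exact le_antisymm (Matrix.rank_mul_le_right (A * B) A)
    (rank_ge_of_minor (A * B * A) _ _ hminor)
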